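/- Let X, Y ⊆ S_n with the multiplication map X × Y → S_n a length-additive bijection, and let x₀ ∈ X, y₀ ∈ Y be the elements with x₀y₀ = w₀ (x₀ maximal in X in left weak order, y₀ maximal in Y in right weak order). Define X' = {x·x₀⁻¹ : x ∈ X} and Y' = {x₀·y·w₀ : y ∈ Y}. Then the multiplication map X' × Y' → S_n is also a length-additive bijection, and the left-maximal element of X' is x₀⁻¹ while the right-maximal element of Y' is x₀w₀ = w₀y₀⁻¹w₀. -/
import Mathlib


namespace SepPaper

/-- Number of inversions of a permutation of `Fin n`, i.e. its Coxeter length. -/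
def invLen {n : ℕ} (w : Equiv.Perm (Fin n)) : ℕ :=
  (Finset.univ.filter fun p : Fin n × Fin n => p.1 < p.2 ∧ w p.2 < w p.1).card

/-- Right weak order. -/
def leR {n : ℕ} (v u : Equiv.Perm (Fin n)) : Prop :=
  invLen v + invLen (v⁻¹ * u) = invLen u

/-- Left weak order. -/
def leL {n : ℕ} (v u : Equiv.Perm (Fin n)) : Prop :=
  invLen v + invLen (u * v⁻¹) = invLen u

instance {n : ℕ} (v u : Equiv.Perm (Fin n)) : Decidable (leR v u) :=
  inferInstanceAs (Decidable (_ = _))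

instance {n : ℕ} (v u : Equiv.Perm (Fin n)) : Decidable (leL v u) :=
  inferInstanceAs (Decidable (_ = _))

/-- The permutation 3142 (one-indexed) as a permutation of `Fin 4`. -/
def perm3142 : Equiv.Perm (Fin 4) :=
  ⟨![2, 0, 3, 1], ![1, 3, 0, 2], by decide, by decide⟩

/-- The permutation 2413 (one-indexed) as a permutation of `Fin 4`. -/
def perm2413 : Equiv.Perm (Fin 4) :=
  ⟨![1, 3, 0, 2], ![2, 0, 3, 1], by decide, by decide⟩

/-- `w` contains the pattern `σ`. -/
def ContainsPattern {n k : ℕ} (w : Equiv.Perm (Fin n)) (σ : Equiv.Perm (Fin k)) : Prop :=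
  ∃ f : Fin k → Fin n, StrictMono f ∧ ∀ a b : Fin k, σ a < σ b ↔ w (f a) < w (f b)

/-- A permutation is separable if it avoids 3142 and 2413. -/
def Separable {n : ℕ} (w : Equiv.Perm (Fin n)) : Prop :=
  ¬ ContainsPattern w perm3142 ∧ ¬ ContainsPattern w perm2413

/-- The longest element `w₀` of `S_n`, `i ↦ n+1-i` (one-indexed). -/
def w0 (n : ℕ) : Equiv.Perm (Fin n) :=
  ⟨Fin.rev, Fin.rev, Fin.rev_rev, Fin.rev_rev⟩



section Aux
variable {n : ℕ}

lemma invLen_one : invLen (1 : Equiv.Perm (Fin n)) = 0 := by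
  unfold invLen
  rw [Finset.card_eq_zero, Finset.filter_eq_empty_iff]
  rintro p -
  simp only [Equiv.Perm.one_apply]
  omega

lemma invLen_inv (w : Equiv.Perm (Fin n)) : invLen w⁻¹ = invLen w := by
  unfold invLen
  apply Finset.card_bij' (fun p _ => (w⁻¹ p.2, w⁻¹ p.1)) (fun p _ => (w p.2, w p.1))
  · intro p hp
    simp only [Finset.mem_filter, Finset.mem_univ, true_and] at hp ⊢
    simpa using hp.symm
  · intro p hp
    simp only [Finset.mem_filter, Finset.mem_univ, true_and] at hp ⊢
    exact ⟨hp.2, by simpa using hp.1⟩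
  · intro p hp; simp
  · intro p hp; simp

lemma invLen_w0_mul (w : Equiv.Perm (Fin n)) :
    invLen w + invLen (w0 n * w) = invLen (w0 n) := by
  have hw0 : ∀ i : Fin n, (w0 n) i = i.rev := fun i => rfl
  have key : ∀ p : Fin n × Fin n,
      (p.1 < p.2 ∧ (w0 n * w) p.2 < (w0 n * w) p.1) ↔ (p.1 < p.2 ∧ w p.1 < w p.2) := by
    intro p
    simp only [Equiv.Perm.mul_apply, hw0, Fin.rev_lt_rev]
  have h2 : invLen (w0 n * w) =
      (Finset.univ.filter fun p : Fin n × Fin n => p.1 < p.2 ∧ w p.1 < w p.2).card := by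
    unfold invLen
    congr 1
    apply Finset.filter_congr
    intro p _
    simpa using key p
  have h3 : invLen (w0 n) = (Finset.univ.filter fun p : Fin n × Fin n => p.1 < p.2).card := by
    unfold invLen
    congr 1
    apply Finset.filter_congr
    intro p _
    simp [hw0, Fin.rev_lt_rev]
  rw [h2, h3]
  unfold invLen
  have hne : ∀ p : Fin n × Fin n, p.1 < p.2 → (w p.1 < w p.2 ↔ ¬ w p.2 < w p.1) := by
    intro p hp
    have hne' : w p.1 ≠ w p.2 := fun h => (ne_of_lt hp) (w.injective h)
    constructor
    · exact fun h => h.asymm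
    · intro h
      rcases lt_or_gt_of_ne hne' with h'|h'
      · exact h'
      · exact absurd h' h
  have heq : (Finset.univ.filter fun p : Fin n × Fin n => p.1 < p.2 ∧ w p.1 < w p.2)
      = Finset.univ.filter fun p : Fin n × Fin n => p.1 < p.2 ∧ ¬ w p.2 < w p.1 := by
    apply Finset.filter_congr
    intro p _
    exact and_congr_right (hne p)
  rw [heq]
  have hsplit := Finset.card_filter_add_card_filter_not
    (s := Finset.univ.filter fun p : Fin n × Fin n => p.1 < p.2)
    (p := fun p : Fin n × Fin n => w p.2 < w p.1)
  simp only [Finset.filter_filter] at hsplit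
  exact hsplit

lemma w0_inv : (w0 n)⁻¹ = w0 n := rfl

lemma invLen_mul_w0 (w : Equiv.Perm (Fin n)) :
    invLen w + invLen (w * w0 n) = invLen (w0 n) := by
  have h := invLen_w0_mul (n := n) w⁻¹
  rw [invLen_inv] at h
  have h2 : invLen (w * w0 n) = invLen (w0 n * w⁻¹) := by
    rw [← invLen_inv (w * w0 n), mul_inv_rev, w0_inv]
  rw [h2]
  exact h

lemma eq_one_of_invLen_eq_zero (w : Equiv.Perm (Fin n)) (h : invLen w = 0) :
    w = 1 := by
  have hmono : StrictMono w := by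
    intro i j hij
    rcases lt_trichotomy (w i) (w j) with h'|h'|h'
    · exact h'
    · exact absurd (w.injective h') (ne_of_lt hij)
    · exfalso
      unfold invLen at h
      rw [Finset.card_eq_zero, Finset.filter_eq_empty_iff] at h
      exact h (Finset.mem_univ (i, j)) ⟨hij, h'⟩
  have hid : (w : Fin n → Fin n) = id := by
    have inst : WellFoundedLT (Fin n) := inferInstance
    exact (@StrictMono.range_inj (Fin n) (Fin n) _ _ inst _ id hmono strictMono_id).1
      (by simp [Set.range_eq_univ.mpr w.surjective])
  exact Equiv.ext fun i => congrFun hid i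

end Aux

/-- if `(X, Y)` is a splitting of `S_n` with maximal elements
`x₀ ∈ X`, `y₀ ∈ Y` and `x₀y₀ = w₀`, then `(X·x₀⁻¹, x₀·Y·w₀)` is also a splitting,
with left-maximal element `x₀⁻¹` and right-maximal element `x₀w₀ = w₀y₀⁻¹w₀`. -/
theorem stmt_7 {n : ℕ} (X Y : Set (Equiv.Perm (Fin n)))
    (hadd : ∀ x ∈ X, ∀ y ∈ Y, invLen (x * y) = invLen x + invLen y)
    (hbij : Function.Bijective
      (fun p : X × Y => (p.1 : Equiv.Perm (Fin n)) * (p.2 : Equiv.Perm (Fin n))))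
    (x₀ y₀ : Equiv.Perm (Fin n)) (hx₀ : x₀ ∈ X) (hy₀ : y₀ ∈ Y)
    (hw : x₀ * y₀ = w0 n)
    (hxmax : ∀ x ∈ X, leL x x₀) (hymax : ∀ y ∈ Y, leR y y₀)
    (X' Y' : Set (Equiv.Perm (Fin n)))
    (hX' : X' = (fun x => x * x₀⁻¹) '' X) (hY' : Y' = (fun y => x₀ * y * w0 n) '' Y) :
    (∀ x ∈ X', ∀ y ∈ Y', invLen (x * y) = invLen x + invLen y) ∧
    Function.Bijective
      (fun p : X' × Y' => (p.1 : Equiv.Perm (Fin n)) * (p.2 : Equiv.Perm (Fin n))) ∧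
    x₀⁻¹ ∈ X' ∧ (∀ x ∈ X', leL x x₀⁻¹) ∧
    x₀ * w0 n ∈ Y' ∧ (∀ y ∈ Y', leR y (x₀ * w0 n)) ∧
    x₀ * w0 n = w0 n * y₀⁻¹ * w0 n := by
  have hw0sq : w0 n * w0 n = 1 := Equiv.ext fun i => Fin.rev_rev i
  have hconj : ∀ v : Equiv.Perm (Fin n), invLen (w0 n * v * w0 n) = invLen v := by
    intro v
    have h1 := invLen_mul_w0 (w0 n * v)
    have h2 := invLen_w0_mul v
    omega
  -- the identity lies in X and Y
  obtain ⟨⟨⟨x1, hx1⟩, ⟨y1, hy1⟩⟩, h1⟩ := hbij.2 1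
  have h1' : x1 * y1 = 1 := h1
  have hlen1 : invLen x1 + invLen y1 = 0 := by
    rw [← hadd x1 hx1 y1 hy1, h1', invLen_one]
  have hx1e : x1 = 1 := eq_one_of_invLen_eq_zero _ (by omega)
  have hy1e : y1 = 1 := eq_one_of_invLen_eq_zero _ (by omega)
  have h1X : (1 : Equiv.Perm (Fin n)) ∈ X := hx1e ▸ hx1
  have h1Y : (1 : Equiv.Perm (Fin n)) ∈ Y := hy1e ▸ hy1
  -- length facts
  have hx0y0 : invLen x₀ + invLen y₀ = invLen (w0 n) := by
    rw [← hadd x₀ hx₀ y₀ hy₀, hw]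
  have hXlen : ∀ x ∈ X, invLen x + invLen (x * x₀⁻¹) = invLen x₀ := by
    intro x hx
    have h := hxmax x hx
    have e : invLen (x * x₀⁻¹) = invLen (x₀ * x⁻¹) := by
      rw [← invLen_inv (x * x₀⁻¹), mul_inv_rev, inv_inv]
    rw [e]
    exact h
  have hYlen : ∀ y ∈ Y, invLen x₀ + invLen y + invLen (x₀ * y * w0 n) = invLen (w0 n) := by
    intro y hy
    have h := invLen_mul_w0 (x₀ * y)
    rw [hadd x₀ hx₀ y hy] at h
    omega
  have hkey : ∀ x y : Equiv.Perm (Fin n),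
      (x * x₀⁻¹) * (x₀ * y * w0 n) = x * y * w0 n := by
    intro x y
    group
  refine ⟨?_, ?_, ?_, ?_, ?_, ?_, ?_⟩
  · -- additivity
    rintro x' hx' y' hy'
    rw [hX'] at hx'
    rw [hY'] at hy'
    obtain ⟨x, hx, rfl⟩ := hx'
    obtain ⟨y, hy, rfl⟩ := hy'
    show invLen ((x * x₀⁻¹) * (x₀ * y * w0 n)) = invLen (x * x₀⁻¹) + invLen (x₀ * y * w0 n)
    rw [hkey x y]
    have h1 := invLen_mul_w0 (x * y)
    rw [hadd x hx y hy] at h1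
    have h2 := hXlen x hx
    have h3 := hYlen y hy
    omega
  · constructor
    · rintro ⟨⟨a, ha⟩, ⟨b, hb⟩⟩ ⟨⟨c, hc⟩, ⟨d, hd⟩⟩ h
      have h' : a * b = c * d := h
      rw [hX'] at ha hc
      rw [hY'] at hb hd
      obtain ⟨xa, hxa, rfl⟩ := ha
      obtain ⟨xc, hxc, rfl⟩ := hc
      obtain ⟨yb, hyb, rfl⟩ := hb
      obtain ⟨yd, hyd, rfl⟩ := hd
      rw [hkey xa yb, hkey xc yd] at h'
      have h'' : xa * yb = xc * yd := mul_right_cancel h'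
      have heq := hbij.1 (a₁ := (⟨xa, hxa⟩, ⟨yb, hyb⟩)) (a₂ := (⟨xc, hxc⟩, ⟨yd, hyd⟩)) h''
      have e1 : xa = xc := congrArg (fun p : X × Y => (p.1 : Equiv.Perm (Fin n))) heq
      have e2 : yb = yd := congrArg (fun p : X × Y => (p.2 : Equiv.Perm (Fin n))) heq
      subst e1
      subst e2
      rfl
    · intro w
      obtain ⟨⟨⟨x, hx⟩, ⟨y, hy⟩⟩, hxy⟩ := hbij.2 (w * w0 n)
      have hxy' : x * y = w * w0 n := hxy
      refine ⟨(⟨x * x₀⁻¹, by rw [hX']; exact ⟨x, hx, rfl⟩⟩,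
              ⟨x₀ * y * w0 n, by rw [hY']; exact ⟨y, hy, rfl⟩⟩), ?_⟩
      show (x * x₀⁻¹) * (x₀ * y * w0 n) = w
      rw [hkey x y, hxy', mul_assoc, hw0sq, mul_one]
  · rw [hX']
    exact ⟨1, h1X, one_mul _⟩
  · intro x' hx'
    rw [hX'] at hx'
    obtain ⟨x, hx, rfl⟩ := hx'
    show invLen (x * x₀⁻¹) + invLen (x₀⁻¹ * (x * x₀⁻¹)⁻¹) = invLen x₀⁻¹
    have e : x₀⁻¹ * (x * x₀⁻¹)⁻¹ = x⁻¹ := by group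
    rw [e, invLen_inv, invLen_inv]
    have := hXlen x hx
    omega
  · rw [hY']
    exact ⟨1, h1Y, by show x₀ * 1 * w0 n = x₀ * w0 n; rw [mul_one]⟩
  · intro y' hy'
    rw [hY'] at hy'
    obtain ⟨y, hy, rfl⟩ := hy'
    show invLen (x₀ * y * w0 n) + invLen ((x₀ * y * w0 n)⁻¹ * (x₀ * w0 n)) = invLen (x₀ * w0 n)
    have e : (x₀ * y * w0 n)⁻¹ * (x₀ * w0 n) = (w0 n)⁻¹ * y⁻¹ * w0 n := by group
    rw [w0_inv] at e
    rw [e, hconj, invLen_inv]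
    have h1 := hYlen y hy
    have h2 := invLen_mul_w0 x₀
    omega
  · have hx0e : x₀ = w0 n * y₀⁻¹ := by rw [← hw]; group
    rw [hx0e, mul_assoc]

end SepPaper
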